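/- For every positive integer n, the shadow of every n-vertex {K4^{3-}, F5}-free 3-graph H with minimum degree δ(H) > n²/12 is K4-free. -/

import Mathlib

open Finset

section Defs

variable {V : Type*} [DecidableEq V]

/-- The degree of a vertex `v` in the 3-graph `H`: the number of edges containing `v`. -/
def degH (H : Finset (Finset V)) (v : V) : ℕ :=
  (H.filter fun e => v ∈ e).card

/-- `H` contains a copy of the generalized triangle `F₅ = {abc, abd, cde}`. -/
def HasF5 (H : Finset (Finset V)) : Prop :=
  ∃ a b c d e : V,
    a ≠ b ∧ a ≠ c ∧ a ≠ d ∧ a ≠ e ∧ b ≠ c ∧ b ≠ d ∧ b ≠ e ∧ c ≠ d ∧ c ≠ e ∧ d ≠ e ∧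
    ({a, b, c} : Finset V) ∈ H ∧ ({a, b, d} : Finset V) ∈ H ∧ ({c, d, e} : Finset V) ∈ H

/-- `H` contains a copy of `K₄³⁻ = {abc, abd, acd}`. -/
def HasK43m (H : Finset (Finset V)) : Prop :=
  ∃ a b c d : V,
    a ≠ b ∧ a ≠ c ∧ a ≠ d ∧ b ≠ c ∧ b ≠ d ∧ c ≠ d ∧
    ({a, b, c} : Finset V) ∈ H ∧ ({a, b, d} : Finset V) ∈ H ∧ ({a, c, d} : Finset V) ∈ H

/-- `H` is 3-partite: the vertex set can be partitioned into three parts so that every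
edge has at most one vertex in each part. -/
def Tripartite (H : Finset (Finset V)) : Prop :=
  ∃ P : V → Fin 3, ∀ e ∈ H, ∀ u ∈ e, ∀ v ∈ e, u ≠ v → P u ≠ P v

/-- The shadow graph `∂H` of the 3-graph `H`: two distinct vertices are adjacent iff
they lie in a common edge of `H`. -/
def shadowG (H : Finset (Finset V)) : SimpleGraph V where
  Adj u v := u ≠ v ∧ ∃ e ∈ H, u ∈ e ∧ v ∈ e
  symm := by
    constructor
    rintro u v ⟨hne, e, he, hu, hv⟩
    exact ⟨hne.symm, e, he, hv, hu⟩
  loopless := by constructor; rintro u ⟨hne, -⟩; exact hne rfl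

end Defs

/-!
Links of two vertices that are adjacent in `∂H` are disjoint: a pair lying in both links,
together with an edge through the two vertices, would form a `K₄³⁻` or an `F₅`. So for a clique
`S` of `∂H` the union of the links of its vertices is a graph on `n` vertices with more than
`|S| n² / 12` edges, and Turán's theorem excludes cliques of size `6`, then `5` (the union graph
lies in `∂H`), then `4`. For `|S| = 4` the union graph is `K₄`-free: colour each pair of a `K₄`
`T` in it by the vertex of `S` completing it to an edge. This colouring is proper, so two
vertices of `T` missing the same colour would span a `K₅` of `∂H` with the other three colours.
Hence each of the four colours is seen by three vertices of `T` and so colours at least two of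
its six pairs, while no pair gets two colours.
-/

namespace SimpleGraph

variable {V : Type*} {G : SimpleGraph V} [Fintype V] [DecidableRel G.Adj] {r : ℕ}

theorem CliqueFree.two_mul_mul_card_edgeFinset_le (h : G.CliqueFree (r + 1)) :
    2 * r * #G.edgeFinset ≤ (r - 1) * Fintype.card V ^ 2 := by
  rcases r.eq_zero_or_pos with rfl | hr
  · simp
  obtain ⟨K, _, hK⟩ := exists_isTuranMaximal (V := V) hr
  have hG : #G.edgeFinset ≤ #(turanGraph (Fintype.card V) r).edgeFinset := by
    rw [← ((isTuranMaximal_iff_nonempty_iso_turanGraph hr).1 hK).some.card_edgeFinset_eq]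
    exact hK.2 h
  grw [hG]
  exact mul_card_edgeFinset_turanGraph_le

end SimpleGraph

section

variable {V : Type*} [DecidableEq V]

namespace Finset

theorem exists_eq_triple_of_card_eq_three {e : Finset V} (he : #e = 3) {c d : V} (hc : c ∈ e)
    (hd : d ∈ e) (hcd : c ≠ d) : ∃ w, e = {c, d, w} := by
  have hd' : d ∈ e.erase c := mem_erase.2 ⟨hcd.symm, hd⟩
  obtain ⟨w, hw⟩ := card_eq_one.1 (by rw [card_erase_of_mem hd', card_erase_of_mem hc, he] :
    #((e.erase c).erase d) = 1)
  exact ⟨w, by rw [← hw, insert_erase hd', insert_erase hc]⟩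

theorem triple_rotate (a b c : V) : ({a, b, c} : Finset V) = {b, c, a} := by
  rw [insert_comm, pair_comm]

end Finset

structure IsK43mF5Free (H : Finset (Finset V)) : Prop where
  card_eq_three : ∀ e ∈ H, #e = 3
  not_hasK43m : ¬ HasK43m H
  not_hasF5 : ¬ HasF5 H

namespace IsK43mF5Free

variable {H : Finset (Finset V)}

theorem not_adj_of_mem_of_mem (hH : IsK43mF5Free H) {a b c d : V} (habc : {c, a, b} ∈ H)
    (habd : {d, a, b} ∈ H) : ¬ (shadowG H).Adj c d := by
  rw [triple_rotate] at habc habd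
  rintro ⟨hcd, e, he, hc, hd⟩
  obtain ⟨w, rfl⟩ := exists_eq_triple_of_card_eq_three (hH.card_eq_three e he) hc hd hcd
  obtain ⟨hab, hac, hbc⟩ := card_triple_eq_three_iff.1 (hH.card_eq_three _ habc)
  obtain ⟨-, had, hbd⟩ := card_triple_eq_three_iff.1 (hH.card_eq_three _ habd)
  obtain ⟨-, hcw, hdw⟩ := card_triple_eq_three_iff.1 (hH.card_eq_three _ he)
  by_cases hwa : w = a
  · subst hwa
    refine hH.not_hasK43m ⟨w, b, c, d, hab, hac, had, hbc, hbd, hcd, habc, habd, ?_⟩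
    rwa [triple_rotate]
  by_cases hwb : w = b
  · subst hwb
    refine hH.not_hasK43m ⟨w, a, c, d, hab.symm, hbc, hbd, hac, had, hcd, ?_, ?_, ?_⟩
    · rwa [insert_comm]
    · rwa [insert_comm]
    · rwa [triple_rotate]
  exact hH.not_hasF5 ⟨a, b, c, d, w, hab, hac, had, Ne.symm hwa, hbc, hbd, Ne.symm hwb, hcd,
    hcw, hdw, habc, habd, he⟩

end IsK43mF5Free

def link (H : Finset (Finset V)) (c : V) : Finset (Finset V) :=
  {e ∈ H | c ∈ e}.image (·.erase c)

def linkUnion (H : Finset (Finset V)) (S : Finset V) : SimpleGraph V where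
  Adj u v := u ≠ v ∧ ∃ c ∈ S, {c, u, v} ∈ H
  symm := ⟨fun _ _ ⟨huv, c, hc, h⟩ => ⟨huv.symm, c, hc, by rwa [pair_comm]⟩⟩
  loopless := ⟨fun _ h => h.1 rfl⟩

instance (H : Finset (Finset V)) (S : Finset V) : DecidableRel (linkUnion H S).Adj :=
  fun _ _ => inferInstanceAs (Decidable (_ ∧ _))

variable {H : Finset (Finset V)} {S : Finset V}

theorem mem_link {c : V} {p : Finset V} : p ∈ link H c ↔ c ∉ p ∧ insert c p ∈ H := by
  constructor
  · intro h
    obtain ⟨e, he, rfl⟩ := mem_image.1 h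
    obtain ⟨heH, hc⟩ := mem_filter.1 he
    exact ⟨notMem_erase c e, by rwa [insert_erase hc]⟩
  · rintro ⟨hc, h⟩
    exact mem_image.2 ⟨insert c p, mem_filter.2 ⟨h, mem_insert_self c p⟩, erase_insert hc⟩

theorem card_link (c : V) : #(link H c) = degH H c :=
  card_image_of_injOn fun _ he _ he' => erase_injOn' c (mem_filter.1 he).2 (mem_filter.1 he').2

theorem linkUnion_le_shadowG : linkUnion H S ≤ shadowG H :=
  fun _ _ ⟨huv, _, _, h⟩ => ⟨huv, _, h, by simp, by simp⟩

namespace IsK43mF5Free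

theorem card_eq_two_of_mem_link (hH : IsK43mF5Free H) {c : V} {p : Finset V}
    (hp : p ∈ link H c) : #p = 2 := by
  obtain ⟨hc, h⟩ := mem_link.1 hp
  have := hH.card_eq_three _ h
  rw [card_insert_of_notMem hc] at this
  omega

theorem disjoint_link (hH : IsK43mF5Free H) {c d : V} (hcd : (shadowG H).Adj c d) :
    Disjoint (link H c) (link H d) := by
  refine disjoint_left.2 fun p hc hd => ?_
  obtain ⟨x, y, -, rfl⟩ := card_eq_two.1 (hH.card_eq_two_of_mem_link hc)
  exact hH.not_adj_of_mem_of_mem (mem_link.1 hc).2 (mem_link.1 hd).2 hcd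

theorem sum_degH_le_card_edgeFinset [Fintype V] (hH : IsK43mF5Free H)
    (hS : (shadowG H).IsClique S) : ∑ c ∈ S, degH H c ≤ #(linkUnion H S).edgeFinset := by
  have hsub : S.biUnion (link H) ⊆ (linkUnion H S).edgeFinset.image Sym2.toFinset := by
    intro p hp
    obtain ⟨c, hcS, hpc⟩ := mem_biUnion.1 hp
    obtain ⟨x, y, hxy, rfl⟩ := card_eq_two.1 (hH.card_eq_two_of_mem_link hpc)
    refine mem_image.2 ⟨s(x, y), ?_, Sym2.toFinset_mk_eq⟩
    exact SimpleGraph.mem_edgeFinset.2 ⟨hxy, c, hcS, (mem_link.1 hpc).2⟩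
  calc ∑ c ∈ S, degH H c = #(S.biUnion (link H)) := by
        rw [card_biUnion fun c hc d hd hcd => hH.disjoint_link (hS hc hd hcd)]
        simp only [card_link]
    _ ≤ #((linkUnion H S).edgeFinset.image Sym2.toFinset) := card_le_card hsub
    _ ≤ #(linkUnion H S).edgeFinset := card_image_le

theorem mul_lt_of_cliqueFree [Fintype V] (hH : IsK43mF5Free H)
    (hδ : ∀ v, Fintype.card V ^ 2 < 12 * degH H v) {k r : ℕ} (hk : 0 < k)
    (hS : (shadowG H).IsNClique k S) (hfree : (linkUnion H S).CliqueFree (r + 1)) :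
    k * r < 6 * (r - 1) := by
  have hne : S.Nonempty := card_pos.1 (hS.card_eq ▸ hk)
  set n := Fintype.card V
  have : Nonempty V := hne.to_type
  have hr : 0 < r := by
    rcases r.eq_zero_or_pos with rfl | hr
    · exact absurd (SimpleGraph.cliqueFree_one.1 hfree) (not_isEmpty_of_nonempty V)
    · exact hr
  have hdeg : #S * n ^ 2 < 12 * #(linkUnion H S).edgeFinset :=
    calc #S * n ^ 2 = ∑ _c ∈ S, n ^ 2 := by rw [sum_const, smul_eq_mul]
      _ < ∑ c ∈ S, 12 * degH H c := sum_lt_sum_of_nonempty hne fun c _ => hδ c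
      _ ≤ 12 * #(linkUnion H S).edgeFinset := by
        rw [← mul_sum]; exact Nat.mul_le_mul_left 12 (hH.sum_degH_le_card_edgeFinset hS.isClique)
  refine Nat.lt_of_mul_lt_mul_right (a := 2 * n ^ 2) ?_
  rw [← hS.card_eq]
  calc #S * r * (2 * n ^ 2) = 2 * r * (#S * n ^ 2) := by ring
    _ < 2 * r * (12 * #(linkUnion H S).edgeFinset) := Nat.mul_lt_mul_of_pos_left hdeg (by omega)
    _ = 12 * (2 * r * #(linkUnion H S).edgeFinset) := by ring
    _ ≤ 12 * ((r - 1) * n ^ 2) := Nat.mul_le_mul_left 12 hfree.two_mul_mul_card_edgeFinset_le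
    _ = 6 * (r - 1) * (2 * n ^ 2) := by ring

theorem adj_of_forall_notMem (hH : IsK43mF5Free H) {T : Finset V}
    (hT : (linkUnion H S).IsClique T) (hST : #S ≤ #T) {g x : V} (hg : g ∈ S) (hx : x ∈ T)
    (hgx : ∀ z ∈ T, {g, x, z} ∉ H) : ∀ c ∈ S.erase g, (shadowG H).Adj x c := by
  set N := {c ∈ S.erase g | ∃ z ∈ T, {c, x, z} ∈ H}
  have hTN : #(T.erase x) ≤ #N := by
    refine card_le_card_of_forall_subsingleton (fun z c => {c, x, z} ∈ H) ?_ ?_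
    · intro z hz
      obtain ⟨hzx, hzT⟩ := mem_erase.1 hz
      obtain ⟨-, c, hc, hcxz⟩ := hT hx hzT hzx.symm
      have hcg : c ≠ g := by rintro rfl; exact hgx z hzT hcxz
      exact ⟨c, mem_filter.2 ⟨mem_erase.2 ⟨hcg, hc⟩, z, hzT, hcxz⟩, hcxz⟩
    · rintro c - z ⟨hz, hcxz⟩ z' ⟨hz', hcxz'⟩
      by_contra hzz'
      refine hH.not_adj_of_mem_of_mem (a := c) (b := x) ?_ ?_
        (linkUnion_le_shadowG (hT (mem_erase.1 hz).2 (mem_erase.1 hz').2 hzz'))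
      · rwa [← triple_rotate] at hcxz
      · rwa [← triple_rotate] at hcxz'
  have hN : N = S.erase g := eq_of_subset_of_card_le (filter_subset _ _) (by
    rw [card_erase_of_mem hg]
    rw [card_erase_of_mem hx] at hTN
    omega)
  intro c hc
  rw [← hN] at hc
  obtain ⟨-, z, -, hcxz⟩ := mem_filter.1 hc
  have hcx := (card_triple_eq_three_iff.1 (hH.card_eq_three _ hcxz)).1
  exact ⟨hcx.symm, _, hcxz, by simp, by simp⟩

theorem exists_mem_or_exists_mem (hH : IsK43mF5Free H) (h5 : (shadowG H).CliqueFree 5)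
    (hS : (shadowG H).IsNClique 4 S) {T : Finset V} (hT : (linkUnion H S).IsNClique 4 T)
    {g x y : V} (hg : g ∈ S) (hx : x ∈ T) (hy : y ∈ T) (hxy : x ≠ y) :
    (∃ z ∈ T, {g, x, z} ∈ H) ∨ ∃ z ∈ T, {g, y, z} ∈ H := by
  by_contra! ⟨hgx, hgy⟩
  have hST : #S ≤ #T := by rw [hS.card_eq, hT.card_eq]
  have hxS := hH.adj_of_forall_notMem hT.isClique hST hg hx hgx
  have hyS := hH.adj_of_forall_notMem hT.isClique hST hg hy hgy
  have hxS' : x ∉ S.erase g := fun h => (hxS x h).ne rfl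
  have hyS' : y ∉ S.erase g := fun h => (hyS y h).ne rfl
  refine h5 (insert x (insert y (S.erase g))) ⟨?_, ?_⟩
  · rw [coe_insert, coe_insert, SimpleGraph.isClique_insert, SimpleGraph.isClique_insert]
    refine ⟨⟨hS.isClique.subset (by simp), fun c hc _ => hyS c hc⟩, ?_⟩
    rintro c (rfl | hc) -
    · exact linkUnion_le_shadowG (hT.isClique hx hy hxy)
    · exact hxS c hc
  · rw [card_insert_of_notMem (by simp [hxy, hxS']), card_insert_of_notMem hyS',
      card_erase_of_mem hg, hS.card_eq]

theorem card_filter_exists_mem_le (hH : IsK43mF5Free H) (T : Finset V) (g : V) :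
    #{x ∈ T | ∃ z ∈ T, {g, x, z} ∈ H} ≤ 2 * #{p ∈ link H g | p ⊆ T} :=
  calc #{x ∈ T | ∃ z ∈ T, {g, x, z} ∈ H} ≤ #({p ∈ link H g | p ⊆ T}.biUnion id) := by
        refine card_le_card fun x hx => ?_
        obtain ⟨hxT, z, hzT, hgxz⟩ := mem_filter.1 hx
        obtain ⟨hgx, hgz, -⟩ := card_triple_eq_three_iff.1 (hH.card_eq_three _ hgxz)
        refine mem_biUnion.2
          ⟨{x, z}, mem_filter.2 ⟨mem_link.2 ⟨?_, hgxz⟩, ?_⟩, mem_insert_self x {z}⟩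
        · simp [hgx, hgz]
        · simp [insert_subset_iff, hxT, hzT]
    _ ≤ ∑ p ∈ {p ∈ link H g | p ⊆ T}, #p := card_biUnion_le
    _ = 2 * #{p ∈ link H g | p ⊆ T} := by
        rw [sum_congr rfl fun p hp => hH.card_eq_two_of_mem_link (mem_filter.1 hp).1, sum_const,
          smul_eq_mul, mul_comm]

theorem three_le_card_filter_exists_mem (hH : IsK43mF5Free H) (h5 : (shadowG H).CliqueFree 5)
    (hS : (shadowG H).IsNClique 4 S) {T : Finset V} (hT : (linkUnion H S).IsNClique 4 T)
    {g : V} (hg : g ∈ S) : 3 ≤ #{x ∈ T | ∃ z ∈ T, {g, x, z} ∈ H} := by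
  have hunseen : #{x ∈ T | ¬ ∃ z ∈ T, {g, x, z} ∈ H} ≤ 1 := by
    refine card_le_one.2 fun x hx y hy => ?_
    by_contra hxy
    obtain (h | h) := hH.exists_mem_or_exists_mem h5 hS hT hg (mem_filter.1 hx).1
      (mem_filter.1 hy).1 hxy
    exacts [(mem_filter.1 hx).2 h, (mem_filter.1 hy).2 h]
  have := card_filter_add_card_filter_not (s := T) fun x => ∃ z ∈ T, {g, x, z} ∈ H
  have := hT.card_eq
  omega

theorem linkUnion_cliqueFree_four (hH : IsK43mF5Free H) (h5 : (shadowG H).CliqueFree 5)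
    (hS : (shadowG H).IsNClique 4 S) : (linkUnion H S).CliqueFree 4 := by
  intro T hT
  set pairs : V → Finset (Finset V) := fun g => {p ∈ link H g | p ⊆ T}
  have hle : ∑ g ∈ S, #(pairs g) ≤ 6 := by
    rw [← card_biUnion fun g hg g' hg' hgg' =>
      (hH.disjoint_link (hS.isClique hg hg' hgg')).mono (filter_subset _ _) (filter_subset _ _)]
    calc #(S.biUnion pairs) ≤ #(T.powersetCard 2) := card_le_card <| biUnion_subset.2
          fun g _ p hp => mem_powersetCard.2
            ⟨(mem_filter.1 hp).2, hH.card_eq_two_of_mem_link (mem_filter.1 hp).1⟩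
      _ = 6 := by rw [card_powersetCard, hT.card_eq]; rfl
  have hge : #S • 2 ≤ ∑ g ∈ S, #(pairs g) := card_nsmul_le_sum _ _ _ fun g hg => by
    show 2 ≤ #{p ∈ link H g | p ⊆ T}
    have := hH.three_le_card_filter_exists_mem h5 hS hT hg
    have := hH.card_filter_exists_mem_le T g
    omega
  rw [smul_eq_mul, hS.card_eq] at hge
  omega

theorem shadowG_cliqueFree_six [Fintype V] (hH : IsK43mF5Free H)
    (hδ : ∀ v, Fintype.card V ^ 2 < 12 * degH H v) : (shadowG H).CliqueFree 6 := fun S hS => by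
  have := hH.mul_lt_of_cliqueFree hδ (by norm_num) hS
    (SimpleGraph.cliqueFree_of_card_lt (Nat.lt_succ_self (Fintype.card V)))
  omega

theorem shadowG_cliqueFree_five [Fintype V] (hH : IsK43mF5Free H)
    (hδ : ∀ v, Fintype.card V ^ 2 < 12 * degH H v) : (shadowG H).CliqueFree 5 := fun S hS => by
  have := hH.mul_lt_of_cliqueFree hδ (by norm_num) hS
    ((hH.shadowG_cliqueFree_six hδ).anti linkUnion_le_shadowG)
  omega

theorem shadowG_cliqueFree_four [Fintype V] (hH : IsK43mF5Free H)
    (hδ : ∀ v, Fintype.card V ^ 2 < 12 * degH H v) : (shadowG H).CliqueFree 4 := fun S hS => by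
  have := hH.mul_lt_of_cliqueFree hδ (by norm_num) hS
    (hH.linkUnion_cliqueFree_four (hH.shadowG_cliqueFree_five hδ) hS)
  omega

end IsK43mF5Free

end

theorem K43m_F5_shadow_K4_free_general (n : ℕ)
    (V : Type*) [Fintype V] [DecidableEq V] (hV : Fintype.card V = n)
    (H : Finset (Finset V)) (h3 : ∀ e ∈ H, e.card = 3)
    (hK : ¬ HasK43m H) (hF5 : ¬ HasF5 H)
    (hδ : ∀ v : V, (n : ℝ) ^ 2 / 12 < (degH H v : ℝ)) :
    (shadowG H).CliqueFree 4 := by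
  refine IsK43mF5Free.shadowG_cliqueFree_four ⟨h3, hK, hF5⟩ fun v => ?_
  have := hδ v
  rw [hV]
  exact_mod_cast (by linarith : (n : ℝ) ^ 2 < 12 * degH H v)

/-- For every positive integer `n`, the shadow of every `n`-vertex `{K₄³⁻, F₅}`-free
3-graph with minimum degree greater than `n²/12` is `K₄`-free. -/
theorem K43m_F5_shadow_K4_free (n : ℕ) (hn : 0 < n)
    (V : Type*) [Fintype V] [DecidableEq V] (hV : Fintype.card V = n)
    (H : Finset (Finset V)) (h3 : ∀ e ∈ H, e.card = 3)
    (hK : ¬ HasK43m H) (hF5 : ¬ HasF5 H)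
    (hδ : ∀ v : V, (n : ℝ) ^ 2 / 12 < (degH H v : ℝ)) :
    (shadowG H).CliqueFree 4 :=
  K43m_F5_shadow_K4_free_general n V hV H h3 hK hF5 hδ
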